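/- arXiv:1604.08513 — 2 statements merged into one kernel-verified Lean document; each statement's English description precedes it below -/
import Mathlib

section
/- Let μ be a finite Borel measure on ℝ and α ∈ (0,1). Suppose that for every δ > 0 there exist mutually singular Borel measures μ₁^δ and μ₂^δ with μ = μ₁^δ + μ₂^δ, μ₁^δ uniformly α-Hölder singular, and μ₂^δ(ℝ) < δ. Then μ-essential supremum of the upper pointwise scaling exponent d_μ⁺ is at most α, where d_μ⁺(x) := limsup_{ε→0} ln μ(B(x;ε))/ln ε (set to +∞ if μ(B(x;ε)) = 0 for some ε > 0). -/
open MeasureTheory Metric Set Filter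
open scoped ENNReal Topology

open Classical in
/-- The upper pointwise scaling exponent `d_μ⁺(x)`, valued in `EReal`;
`+∞` when some ball around `x` has zero measure. -/
noncomputable def dUpper (mu : Measure ℝ) (x : ℝ) : EReal :=
  if ∀ ε : ℝ, 0 < ε → 0 < mu (Metric.ball x ε) then
    Filter.limsup
      (fun r : ℝ => ((Real.log (mu (Metric.ball x r)).toReal / Real.log r : ℝ) : EReal))
      (nhdsWithin 0 (Set.Ioi 0))
  else ⊤

/-- `μ` is uniformly `α`-Hölder singular: there are `C > 0` and `0 < r₀ < 1` with
`μ(B(x;r)) ≥ C r^α` for all `0 < r < r₀` and `μ`-a.e. `x`. -/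
def UnifHolderSing (mu : Measure ℝ) (alpha : ℝ) : Prop :=
  ∃ C r₀ : ℝ, 0 < C ∧ 0 < r₀ ∧ r₀ < 1 ∧ ∀ r : ℝ, 0 < r → r < r₀ →
    ∀ᵐ x ∂mu, ENNReal.ofReal (C * r ^ alpha) ≤ mu (Metric.ball x r)

/-!
A lower bound `μ(B(x;r)) ≥ C r^α` for small `r` gives `ln μ(B(x;r)) / ln r ≤ α + ln C / ln r`,
whose right side tends to `α`, so `d_μ⁺(x) ≤ α`. Since `μ₁^δ ≤ μ`, this holds at `μ₁^δ`-a.e. point,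
so the set where `d_μ⁺ > α` has `μ`-measure at most `μ₂^δ(ℝ) < δ` for every `δ`, hence is null.
-/

lemma limsup_log_div_log_le_of_rpow_le {f : ℝ → ℝ} {C α : ℝ} (hC : 0 < C)
    (hf : ∀ᶠ r in 𝓝[>] 0, C * r ^ α ≤ f r) :
    limsup (fun r : ℝ => ((Real.log (f r) / Real.log r : ℝ) : EReal)) (𝓝[>] 0) ≤ α := by
  have hbound : ∀ᶠ r in 𝓝[>] (0 : ℝ),
      ((Real.log (f r) / Real.log r : ℝ) : EReal) ≤ ((Real.log C / Real.log r + α : ℝ) : EReal) := by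
    filter_upwards [hf, Ioo_mem_nhdsGT one_pos] with r hr ⟨hr0, hr1⟩
    have hlog_neg : Real.log r < 0 := Real.log_neg hr0 hr1
    have hlog_le : Real.log C + α * Real.log r ≤ Real.log (f r) := by
      rw [← Real.log_rpow hr0, ← Real.log_mul hC.ne' (by positivity)]
      exact Real.log_le_log (by positivity) hr
    refine EReal.coe_le_coe_iff.2 ?_
    calc Real.log (f r) / Real.log r
        ≤ (Real.log C + α * Real.log r) / Real.log r :=
          div_le_div_of_nonpos_of_le hlog_neg.le hlog_le
      _ = Real.log C / Real.log r + α := by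
          rw [add_div, mul_div_cancel_right₀ _ hlog_neg.ne]
  have hlim : Tendsto (fun r : ℝ => Real.log C / Real.log r + α) (𝓝[>] 0) (𝓝 α) := by
    simpa using (Real.tendsto_log_nhdsGT_zero.const_div_atBot (Real.log C)).add_const α
  exact (limsup_le_limsup hbound).trans_eq (EReal.tendsto_coe.2 hlim).limsup_eq

lemma dUpper_le_of_eventually_rpow_le_measure_ball {μ : Measure ℝ}
    [IsFiniteMeasureOnCompacts μ] {x C α : ℝ} (hC : 0 < C)
    (h : ∀ᶠ r in 𝓝[>] 0, ENNReal.ofReal (C * r ^ α) ≤ μ (ball x r)) :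
    dUpper μ x ≤ α := by
  have hball_pos : ∀ ε : ℝ, 0 < ε → 0 < μ (ball x ε) := by
    intro ε hε
    obtain ⟨r, hr, hr0, hrε⟩ := (h.and (Ioo_mem_nhdsGT hε)).exists
    calc 0 < ENNReal.ofReal (C * r ^ α) := ENNReal.ofReal_pos.2 (by positivity)
      _ ≤ μ (ball x r) := hr
      _ ≤ μ (ball x ε) := measure_mono (ball_subset_ball hrε.le)
  rw [dUpper, if_pos hball_pos]
  refine limsup_log_div_log_le_of_rpow_le hC (h.mono fun r hr => ?_)
  exact (ENNReal.ofReal_le_iff_le_toReal measure_ball_lt_top.ne).1 hr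

/-- The exchange of "for all `r`" and "for a.e. `x`" goes through countably many rational radii;
this costs the factor `2 ^ α` in the constant. -/
lemma UnifHolderSing.exists_ae_eventually_rpow_le_measure_ball {μ : Measure ℝ} {α : ℝ}
    (h : UnifHolderSing μ α) (hα : 0 ≤ α) :
    ∃ C > 0, ∀ᵐ x ∂μ, ∀ᶠ r in 𝓝[>] 0, ENNReal.ofReal (C * r ^ α) ≤ μ (ball x r) := by
  obtain ⟨C, r₀, hC, hr₀, -, hball⟩ := h
  have hrat : ∀ᵐ x ∂μ, ∀ q : ℚ, 0 < (q : ℝ) → (q : ℝ) < r₀ →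
      ENNReal.ofReal (C * (q : ℝ) ^ α) ≤ μ (ball x q) :=
    ae_all_iff.2 fun q => eventually_imp_distrib_left.2 fun hq0 =>
      eventually_imp_distrib_left.2 (hball q hq0)
  refine ⟨C / 2 ^ α, by positivity, ?_⟩
  filter_upwards [hrat] with x hx
  filter_upwards [Ioo_mem_nhdsGT hr₀] with r ⟨hr, hrr₀⟩
  obtain ⟨q, hrq, hqr⟩ := exists_rat_btwn (half_lt_self hr)
  have hq : 0 < (q : ℝ) := (half_pos hr).trans hrq
  calc ENNReal.ofReal (C / 2 ^ α * r ^ α)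
      = ENNReal.ofReal (C * (r / 2) ^ α) := by
        rw [Real.div_rpow hr.le zero_le_two]; ring_nf
    _ ≤ ENNReal.ofReal (C * (q : ℝ) ^ α) := by
        gcongr
    _ ≤ μ (ball x q) := hx q hq (hqr.trans hrr₀)
    _ ≤ μ (ball x r) := measure_mono (ball_subset_ball hqr.le)

lemma UnifHolderSing.ae_dUpper_le {μ ν : Measure ℝ} [IsFiniteMeasureOnCompacts μ] {α : ℝ}
    (h : UnifHolderSing ν α) (hα : 0 ≤ α) (hle : ν ≤ μ) :
    ∀ᵐ x ∂ν, dUpper μ x ≤ α := by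
  obtain ⟨C, hC, hae⟩ := h.exists_ae_eventually_rpow_le_measure_ball hα
  filter_upwards [hae] with x hx
  exact dUpper_le_of_eventually_rpow_le_measure_ball hC (hx.mono fun r hr => hr.trans (hle _))

lemma MeasureTheory.ae_of_forall_exists_add_ae_of_measure_univ_lt {Ω : Type*}
    [MeasurableSpace Ω] {μ : Measure Ω} {p : Ω → Prop}
    (h : ∀ δ : ℝ, 0 < δ → ∃ μ₁ μ₂ : Measure Ω,
      μ = μ₁ + μ₂ ∧ (∀ᵐ x ∂μ₁, p x) ∧ μ₂ univ < ENNReal.ofReal δ) :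
    ∀ᵐ x ∂μ, p x := by
  have hsmall : ∀ δ : ℝ, 0 < δ → μ {x | ¬p x} ≤ ENNReal.ofReal δ := by
    intro δ hδ
    obtain ⟨μ₁, μ₂, rfl, hp, hμ₂⟩ := h δ hδ
    calc (μ₁ + μ₂) {x | ¬p x} = μ₁ {x | ¬p x} + μ₂ {x | ¬p x} := Measure.add_apply _ _ _
      _ ≤ 0 + μ₂ univ := add_le_add (ae_iff.1 hp).le (measure_mono (subset_univ _))
      _ ≤ ENNReal.ofReal δ := by rw [zero_add]; exact hμ₂.le
  refine ae_iff.2 (nonpos_iff_eq_zero.1 (ENNReal.le_of_forall_pos_le_add fun ε hε _ => ?_))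
  simpa using hsmall ε hε

theorem decomposition_essSup_le (mu : Measure ℝ) [IsFiniteMeasure mu]
    (alpha : ℝ) (halpha : alpha ∈ Set.Ioo (0:ℝ) 1)
    (h : ∀ δ : ℝ, 0 < δ → ∃ mu₁ mu₂ : Measure ℝ,
      mu = mu₁ + mu₂ ∧ Measure.MutuallySingular mu₁ mu₂ ∧
      UnifHolderSing mu₁ alpha ∧ mu₂ Set.univ < ENNReal.ofReal δ) :
    essSup (dUpper mu) mu ≤ (alpha : EReal) := by
  refine essSup_le_of_ae_le _ (ae_of_forall_exists_add_ae_of_measure_univ_lt fun δ hδ => ?_)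
  obtain ⟨mu₁, mu₂, hmu, -, hHolder, hsmall⟩ := h δ hδ
  have hle : mu₁ ≤ mu := hmu ▸ Measure.le_add_right le_rfl
  exact ⟨mu₁, mu₂, hmu, hHolder.ae_dUpper_le halpha.1.le hle, hsmall⟩
end

section
/- Let μ be a finite Borel measure on ℝ with μ-essential supremum of d_μ⁺ at most α, for α ∈ (0,1). Then for every ε with 0 < ε ≤ 1−α and every δ > 0, there exists a Borel set S ⊂ ℝ with μ(Sᶜ) < δ and a constant 0 < r₀ < 1 such that for every 0 < r < r₀ and every x ∈ S, μ(B(x;r)) ≥ r^{α+ε}. -/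
open MeasureTheory Metric Set Filter
open scoped ENNReal Topology

/-- Measurability of the measure of a ball as a function of the center. -/
lemma measurable_measure_ball_center (mu : Measure ℝ) [IsFiniteMeasure mu] (c : ℝ) :
    Measurable fun x : ℝ => mu (Metric.ball x c) := by
  have hs : MeasurableSet {p : ℝ × ℝ | dist p.2 p.1 < c} :=
    (isOpen_lt (continuous_snd.dist continuous_fst) continuous_const).measurableSet
  have h2 := measurable_measure_prodMk_left (ν := mu) hs
  have heq : ∀ x : ℝ, Prod.mk x ⁻¹' {p : ℝ × ℝ | dist p.2 p.1 < c} = Metric.ball x c := by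
    intro x; ext y; simp [Metric.mem_ball]
  simpa [heq] using h2

/-- From the rational-radius bound we get the bound for all real radii. -/
lemma rpow_le_measure_ball_of_rat (mu : Measure ℝ) {e : ℝ} (he : 0 < e) {x r : ℝ}
    (hr : 0 < r)
    (H : ∀ q : ℚ, 0 < (q : ℝ) → (q : ℝ) < r →
      ENNReal.ofReal ((q : ℝ) ^ e) ≤ mu (Metric.ball x (q : ℝ))) :
    ENNReal.ofReal (r ^ e) ≤ mu (Metric.ball x r) := by
  refine le_of_forall_lt fun c hc => ?_
  have hcne : c ≠ ⊤ := hc.ne_top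
  have hcr : c.toReal < r ^ e := (ENNReal.lt_ofReal_iff_toReal_lt hcne).mp hc
  set b : ℝ := max c.toReal 0 with hb_def
  have hb0 : 0 ≤ b := le_max_right _ _
  have hb : b < r ^ e := max_lt hcr (Real.rpow_pos_of_pos hr e)
  set t : ℝ := b ^ (1 / e) with ht_def
  have ht0 : 0 ≤ t := Real.rpow_nonneg hb0 _
  have hte : t ^ e = b := by
    rw [ht_def, ← Real.rpow_mul hb0, one_div, inv_mul_cancel₀ he.ne', Real.rpow_one]
  have htr : t < r := by
    have h1 : t < (r ^ e) ^ (1 / e) :=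
      Real.rpow_lt_rpow hb0 hb (by positivity)
    have h2 : (r ^ e) ^ (1 / e) = r := by
      rw [← Real.rpow_mul hr.le, mul_one_div, div_self he.ne', Real.rpow_one]
    rwa [h2] at h1
  obtain ⟨q, hq1, hq2⟩ := exists_rat_btwn htr
  have hq0 : 0 < (q : ℝ) := lt_of_le_of_lt ht0 hq1
  have hqe : b < (q : ℝ) ^ e := by
    calc b = t ^ e := hte.symm
    _ < (q : ℝ) ^ e := Real.rpow_lt_rpow ht0 hq1 he
  have hcq : c < ENNReal.ofReal ((q : ℝ) ^ e) :=
    (ENNReal.lt_ofReal_iff_toReal_lt hcne).mpr (lt_of_le_of_lt (le_max_left _ _) hqe)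
  calc c < ENNReal.ofReal ((q : ℝ) ^ e) := hcq
  _ ≤ mu (Metric.ball x (q : ℝ)) := H q hq0 hq2
  _ ≤ mu (Metric.ball x r) := measure_mono (Metric.ball_subset_ball hq2.le)

theorem essSup_le_egorov (mu : Measure ℝ) [IsFiniteMeasure mu]
    (alpha : ℝ) (halpha : alpha ∈ Set.Ioo (0:ℝ) 1)
    (h : essSup (dUpper mu) mu ≤ (alpha : EReal)) :
    ∀ ε : ℝ, 0 < ε → ε ≤ 1 - alpha → ∀ δ : ℝ, 0 < δ →
      ∃ S : Set ℝ, MeasurableSet S ∧ mu Sᶜ < ENNReal.ofReal δ ∧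
        ∃ r₀ : ℝ, 0 < r₀ ∧ r₀ < 1 ∧ ∀ r : ℝ, 0 < r → r < r₀ → ∀ x ∈ S,
          ENNReal.ofReal (r ^ (alpha + ε)) ≤ mu (Metric.ball x r) := by
  intro ε hε hεα δ hδ
  set e : ℝ := alpha + ε with he_def
  have he : 0 < e := by have := halpha.1; positivity
  -- the approximating sets
  set A : ℕ → Set ℝ := fun n =>
    {x | ∀ q : ℚ, 0 < (q : ℝ) → (q : ℝ) < 1 / (n + 1) →
      ENNReal.ofReal ((q : ℝ) ^ e) ≤ mu (Metric.ball x (q : ℝ))} with hA_def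
  have hAmeas : ∀ n, MeasurableSet (A n) := by
    intro n
    have : A n = ⋂ q : ℚ,
        {x : ℝ | 0 < (q : ℝ) → (q : ℝ) < 1 / (n + 1) →
          ENNReal.ofReal ((q : ℝ) ^ e) ≤ mu (Metric.ball x (q : ℝ))} := by
      ext x; simp [hA_def, Set.mem_iInter]
    rw [this]
    refine MeasurableSet.iInter fun q => ?_
    by_cases hq : 0 < (q : ℝ) ∧ (q : ℝ) < 1 / (n + 1)
    · have : {x : ℝ | 0 < (q : ℝ) → (q : ℝ) < 1 / (n + 1) →
          ENNReal.ofReal ((q : ℝ) ^ e) ≤ mu (Metric.ball x (q : ℝ))}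
          = (fun x : ℝ => mu (Metric.ball x (q : ℝ))) ⁻¹'
            (Set.Ici (ENNReal.ofReal ((q : ℝ) ^ e))) := by
        ext x
        simp only [Set.mem_setOf_eq, Set.mem_preimage, Set.mem_Ici]
        exact ⟨fun hx => hx hq.1 hq.2, fun hx _ _ => hx⟩
      rw [this]
      exact (measurable_measure_ball_center mu _) measurableSet_Ici
    · have : {x : ℝ | 0 < (q : ℝ) → (q : ℝ) < 1 / (n + 1) →
          ENNReal.ofReal ((q : ℝ) ^ e) ≤ mu (Metric.ball x (q : ℝ))} = Set.univ := by
        ext x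
        simp only [Set.mem_setOf_eq, Set.mem_univ, iff_true]
        intro h1 h2
        exact absurd ⟨h1, h2⟩ hq
      rw [this]; exact MeasurableSet.univ
  have hmono : Monotone A := by
    intro n m hnm x hx q hq0 hq1
    refine hx q hq0 (lt_of_lt_of_le hq1 ?_)
    apply one_div_le_one_div_of_le
    · positivity
    · exact_mod_cast Nat.add_le_add_right hnm 1
  -- a.e. every point is in some A n
  have haeU : ∀ᵐ x ∂mu, ∃ n : ℕ, x ∈ A n := by
    have hae : ∀ᵐ x ∂mu, dUpper mu x ≤ (alpha : EReal) :=
      (ae_le_essSup (f := dUpper mu)).mono fun x hx => hx.trans h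
    filter_upwards [hae] with x hx
    by_cases hpos : ∀ ε' : ℝ, 0 < ε' → 0 < mu (Metric.ball x ε')
    · rw [dUpper, if_pos hpos] at hx
      have hlt : Filter.limsup
          (fun r : ℝ => ((Real.log (mu (Metric.ball x r)).toReal / Real.log r : ℝ) : EReal))
          (nhdsWithin 0 (Set.Ioi 0)) < ((e : ℝ) : EReal) := by
        refine hx.trans_lt ?_
        exact_mod_cast (lt_add_of_pos_right alpha hε)
      have hev := Filter.eventually_lt_of_limsup_lt hlt
      have hev' : ∀ᶠ r in nhdsWithin (0:ℝ) (Set.Ioi 0),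
          Real.log (mu (Metric.ball x r)).toReal / Real.log r < e := by
        filter_upwards [hev] with r hr
        exact_mod_cast hr
      obtain ⟨u, hu, hsub⟩ := mem_nhdsGT_iff_exists_Ioo_subset.mp hev'
      have humin : 0 < min u 1 := lt_min hu one_pos
      obtain ⟨n, hn⟩ := exists_nat_gt (1 / min u 1)
      have hn' : 1 / ((n : ℝ) + 1) < min u 1 := by
        rw [div_lt_iff₀ (by positivity)]
        rw [div_lt_iff₀ humin] at hn
        nlinarith [humin.le]
      refine ⟨n, fun q hq0 hq1 => ?_⟩
      have hqu : (q : ℝ) < u := lt_of_lt_of_le (hq1.trans hn') (min_le_left _ _)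
      have hq1' : (q : ℝ) < 1 := lt_of_lt_of_le (hq1.trans hn') (min_le_right _ _)
      have hratio : Real.log (mu (Metric.ball x (q : ℝ))).toReal / Real.log (q : ℝ) < e :=
        hsub ⟨hq0, hqu⟩
      have hm0 : 0 < (mu (Metric.ball x (q : ℝ))).toReal :=
        ENNReal.toReal_pos (hpos _ hq0).ne' (measure_ne_top mu _)
      have hlog : Real.log (q : ℝ) < 0 := Real.log_neg hq0 hq1'
      have h2 : e * Real.log (q : ℝ) < Real.log (mu (Metric.ball x (q : ℝ))).toReal :=
        (div_lt_iff_of_neg hlog).mp hratio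
      have h3 : (q : ℝ) ^ e < (mu (Metric.ball x (q : ℝ))).toReal := by
        rw [← Real.log_rpow hq0] at h2
        exact (Real.log_lt_log_iff (Real.rpow_pos_of_pos hq0 e) hm0).mp h2
      calc ENNReal.ofReal ((q : ℝ) ^ e) ≤ ENNReal.ofReal (mu (Metric.ball x (q : ℝ))).toReal :=
            ENNReal.ofReal_le_ofReal h3.le
      _ = mu (Metric.ball x (q : ℝ)) := ENNReal.ofReal_toReal (measure_ne_top mu _)
    · rw [dUpper, if_neg hpos] at hx
      exact absurd hx (EReal.coe_lt_top alpha).not_ge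
  -- continuity from above
  have h0 : mu (⋂ n, (A n)ᶜ) = 0 := by
    rw [← Set.compl_iUnion]
    have : (⋃ n, A n)ᶜ = {x | ¬ ∃ n : ℕ, x ∈ A n} := by
      ext x; simp
    rw [this]
    exact haeU
  have hT : Tendsto (fun n => mu ((A n)ᶜ)) atTop (𝓝 0) := by
    have := tendsto_measure_iInter_atTop (μ := mu)
      (fun n => (hAmeas n).compl.nullMeasurableSet)
      (fun n m hnm => Set.compl_subset_compl.mpr (hmono hnm))
      ⟨0, measure_ne_top _ _⟩
    rwa [h0] at this
  obtain ⟨N, hN⟩ := (hT.eventually (gt_mem_nhds (ENNReal.ofReal_pos.mpr hδ))).exists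
  refine ⟨A N, hAmeas N, hN, min (1 / (N + 1)) (1 / 2), by positivity, ?_, ?_⟩
  · calc min (1 / ((N : ℝ) + 1)) (1 / 2) ≤ 1 / 2 := min_le_right _ _
    _ < 1 := by norm_num
  · intro r hr0 hrr x hx
    refine rpow_le_measure_ball_of_rat mu he hr0 fun q hq0 hqr => ?_
    exact hx q hq0 (hqr.trans (hrr.trans_le (min_le_left _ _)))
end
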